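/- Let X be a real Banach space with a normalized 1-unconditional basis (e_i)_{i∈ℕ} with biorthogonal functionals (e*_i)_{i∈ℕ}, and let x ∈ S_X be a Daugavet-point. Then for every nonempty finite set E ⊆ ℕ with ‖Σ_{i∈E} e_i‖ = 1 one has ‖x − P_E x‖ = 1. -/

import Mathlib

/-
Unconditionality makes the norm a lattice norm: `|e*_i u| ≤ |e*_i v|` for all `i` gives
`‖u‖ ≤ ‖v‖` (move from `v` to `u` one coordinate at a time; each step is a convex combination of
`v` and a sign flip of it), so `‖x - P_E x‖ ≤ ‖x‖ = 1`. Conversely, let `s_i = ±1` be the sign of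
`e*_i x` and `y = ∑_{i ∈ E} s_i e_i`, a point of the unit ball where the functional
`∑_{i ∈ E} s_i e*_i` takes the value `|E|`. As `y` lies in the closed convex hull of `Δ_δ(x)`, some
`z ∈ Δ_δ(x)` has `∑_{i ∈ E} s_i e*_i z > |E| - δ`, hence `s_k e*_k z > 1 - δ` for every `k ∈ E`.
For `δ ≤ 1/2` this forces `|e*_k (x - z)| ≤ |e*_k z|` on `E`, so `‖P_E x - z‖ ≤ ‖z‖ ≤ 1` and
`2 - δ ≤ ‖x - z‖ ≤ ‖x - P_E x‖ + 1`.
-/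

noncomputable section

variable {X : Type*} [NormedAddCommGroup X] [NormedSpace ℝ X]

/-- `(e, f)` is a normalized 1-unconditional basis of `X` with biorthogonal functionals `f`. -/
structure IsUncondBasis (e : ℕ → X) (f : ℕ → X →L[ℝ] ℝ) : Prop where
  norm_e : ∀ i, ‖e i‖ = 1
  biorth : ∀ i j, f i (e j) = if i = j then (1 : ℝ) else 0
  expand : ∀ x : X, HasSum (fun i => f i x • e i) x
  signs : ∀ (x : X) (θ : ℕ → ℝ), (∀ i, θ i = 1 ∨ θ i = -1) →
    ∃ y : X, HasSum (fun i => θ i • f i x • e i) y ∧ ‖y‖ = ‖x‖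

/-- `Δ_ε(x)`: the set of elements of the closed unit ball that are at distance
at least `2 - ε` from `x`. -/
def deltaSet (x : X) (ε : ℝ) : Set X :=
  {y | ‖y‖ ≤ 1 ∧ 2 - ε ≤ ‖x - y‖}

/-- `x` is a Daugavet-point if for every `ε > 0` the closed unit ball equals the closed
convex hull of `Δ_ε(x)`. -/
def IsDaugavetPoint (x : X) : Prop :=
  ∀ ε : ℝ, 0 < ε → Metric.closedBall (0 : X) 1 = closure (convexHull ℝ (deltaSet x ε))

open Filter Topology

theorem Finset.one_sub_lt_of_card_sub_lt_sum {ι : Type*} {E : Finset ι} {a : ι → ℝ} {ε : ℝ}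
    (ha : ∀ i ∈ E, a i ≤ 1) (hsum : (E.card : ℝ) - ε < ∑ i ∈ E, a i) {k : ι} (hk : k ∈ E) :
    1 - ε < a k := by
  have hdefect : 1 - a k ≤ ∑ i ∈ E, (1 - a i) :=
    Finset.single_le_sum (f := fun i => 1 - a i) (fun i hi => by linarith [ha i hi]) hk
  rw [Finset.sum_sub_distrib, Finset.sum_const, nsmul_one] at hdefect
  linarith

theorem abs_sub_le_abs_of_half_le_mul {s a b : ℝ} (hs : s = 1 ∨ s = -1) (ha : |a| ≤ 1)
    (hsa : 0 ≤ s * a) (hsb : 1 / 2 ≤ s * b) : |a - b| ≤ |b| := by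
  obtain ⟨ha₁, ha₂⟩ := abs_le.mp ha
  rcases hs with rfl | rfl
  · rw [abs_le, abs_of_pos (by linarith : 0 < b)]; constructor <;> linarith
  · rw [abs_le, abs_of_neg (by linarith : b < 0)]; constructor <;> linarith

theorem IsDaugavetPoint.exists_mem_deltaSet_lt_apply {x : X} (hD : IsDaugavetPoint x) {ε : ℝ}
    (hε : 0 < ε) (G : X →L[ℝ] ℝ) {y : X} (hy : ‖y‖ ≤ 1) {c : ℝ} (hc : c < G y) :
    ∃ z ∈ deltaSet x ε, c < G z := by
  by_contra! hle
  have hhalf : closure (convexHull ℝ (deltaSet x ε)) ⊆ {v | G v ≤ c} :=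
    closure_minimal (convexHull_min hle (convex_halfSpace_le G.isLinear c))
      (isClosed_le G.continuous continuous_const)
  have hy' : y ∈ closure (convexHull ℝ (deltaSet x ε)) := by
    rw [← hD ε hε]; simpa using hy
  exact (hhalf hy').not_gt hc

section

variable {e : ℕ → X} {f : ℕ → X →L[ℝ] ℝ}

namespace IsUncondBasis

theorem apply_sum_smul (hb : IsUncondBasis e f) (E : Finset ℕ) (c : ℕ → ℝ) (j : ℕ) :
    f j (∑ i ∈ E, c i • e i) = if j ∈ E then c j else 0 := by
  simp [map_sum, hb.biorth]

theorem norm_sub_two_smul (hb : IsUncondBasis e f) (k : ℕ) (w : X) :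
    ‖w - (2 * f k w) • e k‖ = ‖w‖ := by
  obtain ⟨y, hy, hyw⟩ := hb.signs w (fun i => if i = k then -1 else 1)
    (fun i => by by_cases h : i = k <;> simp [h])
  have hflip : HasSum (fun i => (if i = k then (-1 : ℝ) else 1) • f i w • e i)
      (w - (2 * f k w) • e k) := by
    convert (hb.expand w).sub (hasSum_ite_eq k ((2 * f k w) • e k)) using 1
    ext i
    by_cases h : i = k
    · subst h; simp only [if_true]; module
    · simp [h]
  rwa [hy.unique hflip] at hyw

theorem norm_add_smul_sub_le (hb : IsUncondBasis e f) (k : ℕ) (w : X) {a : ℝ}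
    (ha : |a| ≤ |f k w|) : ‖w + (a - f k w) • e k‖ ≤ ‖w‖ := by
  rcases eq_or_ne (f k w) 0 with h0 | h0
  · simp [show a = 0 by simpa [h0] using ha, h0]
  set t := a / f k w
  have ht : |t| ≤ 1 := by rw [abs_div]; exact div_le_one_of_le₀ ha (abs_nonneg _)
  obtain ⟨ht₁, ht₂⟩ := abs_le.mp ht
  -- a convex combination of `w` and its sign flip at `k`
  have hcomb : w + (a - f k w) • e k
      = ((1 + t) / 2) • w + ((1 - t) / 2) • (w - (2 * f k w) • e k) := by
    rw [show a = t * f k w from (div_mul_cancel₀ a h0).symm]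
    module
  have hw : w ∈ Metric.closedBall (0 : X) ‖w‖ := by simp
  have hflip : w - (2 * f k w) • e k ∈ Metric.closedBall (0 : X) ‖w‖ := by
    simp [hb.norm_sub_two_smul]
  simpa [hcomb] using
    convex_closedBall (0 : X) ‖w‖ hw hflip (by linarith) (by linarith) (by ring)

theorem norm_le_norm_of_abs_apply_le (hb : IsUncondBasis e f) {u v : X}
    (h : ∀ i, |f i u| ≤ |f i v|) : ‖u‖ ≤ ‖v‖ := by
  have hpartial : ∀ F : Finset ℕ, ‖v + ∑ i ∈ F, (f i u - f i v) • e i‖ ≤ ‖v‖ := by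
    intro F
    induction F using Finset.induction_on with
    | empty => simp
    | insert k F hk ih =>
      set w := v + ∑ i ∈ F, (f i u - f i v) • e i
      have hwk : f k w = f k v := by simp [w, hb.apply_sum_smul, hk]
      have hstep : ‖w + (f k u - f k w) • e k‖ ≤ ‖w‖ :=
        hb.norm_add_smul_sub_le k w (hwk ▸ h k)
      rw [Finset.sum_insert hk, add_left_comm]
      rw [hwk, add_comm] at hstep
      exact hstep.trans ih
  have hlim : Tendsto (fun F : Finset ℕ => v + ∑ i ∈ F, (f i u - f i v) • e i) atTop (𝓝 u) := by
    have hsum : HasSum (fun i => (f i u - f i v) • e i) (u - v) := by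
      simpa only [sub_smul] using (hb.expand u).sub (hb.expand v)
    simpa using (show Tendsto _ atTop _ from hsum).const_add v
  exact le_of_tendsto' hlim.norm hpartial

theorem abs_apply_le_norm (hb : IsUncondBasis e f) (k : ℕ) (w : X) : |f k w| ≤ ‖w‖ := by
  have h := hb.norm_le_norm_of_abs_apply_le (u := f k w • e k) (v := w) fun i => by
    rw [map_smul, hb.biorth]
    split_ifs with h <;> simp [h]
  simpa [norm_smul, hb.norm_e] using h

theorem norm_sub_sum_le (hb : IsUncondBasis e f) (E : Finset ℕ) (w : X) :
    ‖w - ∑ i ∈ E, f i w • e i‖ ≤ ‖w‖ :=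
  hb.norm_le_norm_of_abs_apply_le fun j => by
    rw [map_sub, hb.apply_sum_smul]
    split_ifs <;> simp

theorem norm_sum_sub_le (hb : IsUncondBasis e f) {x z : X} (hx : ‖x‖ ≤ 1)
    {s : ℕ → ℝ} (hs : ∀ i, s i = 1 ∨ s i = -1) (hsx : ∀ i, 0 ≤ s i * f i x) {E : Finset ℕ}
    (hsz : ∀ k ∈ E, 1 / 2 ≤ s k * f k z) : ‖∑ i ∈ E, f i x • e i - z‖ ≤ ‖z‖ :=
  hb.norm_le_norm_of_abs_apply_le fun j => by
    rw [map_sub, hb.apply_sum_smul]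
    split_ifs with hj
    · exact abs_sub_le_abs_of_half_le_mul (hs j) ((hb.abs_apply_le_norm j x).trans hx) (hsx j)
        (hsz j hj)
    · simp

end IsUncondBasis

theorem IsDaugavetPoint.exists_mem_deltaSet_one_sub_lt_mul {x : X} (hD : IsDaugavetPoint x)
    (hb : IsUncondBasis e f) {ε : ℝ} (hε : 0 < ε) {s : ℕ → ℝ} (hs : ∀ i, s i = 1 ∨ s i = -1)
    {E : Finset ℕ} (hE : ‖∑ i ∈ E, e i‖ ≤ 1) :
    ∃ z ∈ deltaSet x ε, ∀ k ∈ E, 1 - ε < s k * f k z := by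
  have hs_mul_self : ∀ i, s i * s i = 1 := fun i => by rcases hs i with h | h <;> simp [h]
  have hs_abs : ∀ i, |s i| = 1 := fun i => by rcases hs i with h | h <;> simp [h]
  set y := ∑ i ∈ E, s i • e i
  have hy : ‖y‖ ≤ 1 := by
    rw [show ∑ i ∈ E, e i = ∑ i ∈ E, (1 : ℝ) • e i by simp] at hE
    refine (hb.norm_le_norm_of_abs_apply_le fun j => ?_).trans hE
    rw [hb.apply_sum_smul, hb.apply_sum_smul]
    split_ifs <;> simp [hs_abs]
  set G : X →L[ℝ] ℝ := ∑ i ∈ E, s i • f i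
  have hG : ∀ v, G v = ∑ i ∈ E, s i * f i v := fun v => by simp [G]
  have hGy : G y = E.card := by
    simp +contextual [hG, y, hb.apply_sum_smul, hs_mul_self]
  obtain ⟨z, hz, hGz⟩ :=
    hD.exists_mem_deltaSet_lt_apply hε G hy (c := E.card - ε) (by linarith)
  refine ⟨z, hz, fun k hk => Finset.one_sub_lt_of_card_sub_lt_sum (a := fun i => s i * f i z)
    (fun i _ => ?_) (hG z ▸ hGz) hk⟩
  calc s i * f i z ≤ |s i * f i z| := le_abs_self _
    _ = |f i z| := by rw [abs_mul, hs_abs, one_mul]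
    _ ≤ ‖z‖ := hb.abs_apply_le_norm i z
    _ ≤ 1 := hz.1

end

theorem daugavetPoint_norm_sub_finite_proj_general (e : ℕ → X) (f : ℕ → X →L[ℝ] ℝ)
    (hb : IsUncondBasis e f) (x : X) (hx : ‖x‖ = 1) (hD : IsDaugavetPoint x)
    (E : Finset ℕ) (hEnorm : ‖∑ i ∈ E, e i‖ = 1) :
    ‖x - ∑ i ∈ E, f i x • e i‖ = 1 := by
  set s : ℕ → ℝ := fun i => if 0 ≤ f i x then 1 else -1
  have hs : ∀ i, s i = 1 ∨ s i = -1 := fun i => by by_cases h : 0 ≤ f i x <;> simp [s, h]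
  have hsx : ∀ i, 0 ≤ s i * f i x := fun i => by
    by_cases h : 0 ≤ f i x <;> simp [s, h]; linarith
  refine le_antisymm (hx ▸ hb.norm_sub_sum_le E x) (le_of_forall_pos_le_add fun ε hε => ?_)
  obtain ⟨z, ⟨hz, hxz⟩, hsz⟩ :=
    hD.exists_mem_deltaSet_one_sub_lt_mul hb (lt_min hε one_half_pos) hs hEnorm.le
  have hPz := hb.norm_sum_sub_le (z := z) hx.le hs hsx fun k hk => by
    linarith [hsz k hk, min_le_right ε (1 / 2)]
  linarith [norm_sub_le_norm_sub_add_norm_sub x (∑ i ∈ E, f i x • e i) z, min_le_left ε (1 / 2)]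

/-- If `x` is a Daugavet-point of the unit sphere of a Banach space with a normalized
1-unconditional basis, then `‖x - P_E x‖ = 1` for every nonempty finite set `E ⊆ ℕ`
with `‖∑_{i ∈ E} e_i‖ = 1`. -/
theorem daugavetPoint_norm_sub_finite_proj [CompleteSpace X] (e : ℕ → X) (f : ℕ → X →L[ℝ] ℝ)
    (hb : IsUncondBasis e f) (x : X) (hx : ‖x‖ = 1) (hD : IsDaugavetPoint x)
    (E : Finset ℕ) (hE : E.Nonempty) (hEnorm : ‖∑ i ∈ E, e i‖ = 1) :
    ‖x - ∑ i ∈ E, f i x • e i‖ = 1 :=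
  daugavetPoint_norm_sub_finite_proj_general e f hb x hx hD E hEnorm
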